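/- Let A : H → H be a bounded operator on a Hilbert space, B : U → H, C : H → Y, D : U → Y bounded, and suppose the colligation matrix [[A, B], [C, D]] : H ⊕ U → H ⊕ Y is a coisometry (U U* = I). Then for the transfer function S(z) = D + z C (I − z A)^{-1} B (defined for |z| < 1/‖A‖ or for z in the unit disk when ‖A‖ ≤ 1), the identity (I_Y − S(z) S(ζ)*)/(1 − z conj(ζ)) = C (I − z A)^{-1} (I − conj(ζ) A*)^{-1} C* holds for all z, ζ in the domain. -/

import Mathlib

/-!
Put `Q = (1 - zA)⁻¹` and `R = (1 - ζ̄A*)⁻¹`. Expanding `S(z) S(ζ)*` and substituting the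
coisometry relations for `DD*`, `DB*`, `BD*` and `BB*` leaves `1 - S(z) S(ζ)* = C X C*` with
`X = 1 + z QA + ζ̄ A*R - zζ̄ Q(1 - AA*)R`. Multiplying `X` by `1 - zA` on the left and by
`1 - ζ̄A*` on the right gives the scalar `1 - zζ̄`, so `X = (1 - zζ̄) QR`.
-/

open ContinuousLinearMap
open scoped InnerProduct

theorem one_sub_mul_smul_mul_eq_of_mul_eq_one {𝕜 R : Type*} [CommRing 𝕜] [Ring R]
    [Algebra 𝕜 R] {a b q r : R} {z w : 𝕜}
    (hq : q * (1 - z • a) = 1) (hr : (1 - w • b) * r = 1) :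
    (1 - z * w) • (q * r) =
      1 + z • (q * a) + w • (b * r) - (z * w) • (q * (1 - a * b) * r) := by
  have key : (1 - z * w) • (1 : R) = (1 - z • a) * (1 - w • b) + z • (a * (1 - w • b))
      + w • ((1 - z • a) * b) - (z * w) • (1 - a * b) := by
    simp only [mul_sub, sub_mul, mul_one, one_mul, smul_sub, smul_smul, smul_mul_assoc,
      mul_smul_comm]
    module
  generalize 1 - z • a = e at hq key
  generalize 1 - w • b = f at hr key
  have hef : q * (e * f) * r = 1 := by rw [← mul_assoc, hq, one_mul, hr]
  have haf : q * (a * f) * r = q * a := by rw [mul_assoc, mul_assoc, hr, mul_one]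
  have heb : q * (e * b) * r = b * r := by rw [← mul_assoc, hq, one_mul]
  calc (1 - z * w) • (q * r) = q * ((1 - z * w) • (1 : R)) * r := by simp
    _ = _ := by
      rw [key]
      simp only [mul_add, add_mul, mul_sub, sub_mul, mul_smul_comm, smul_mul_assoc, hef, haf, heb]

section Colligation

variable {𝕜 H U Y : Type*} [NormedField 𝕜]
  [NormedAddCommGroup H] [NormedSpace 𝕜 H] [NormedAddCommGroup U] [NormedSpace 𝕜 U]
  [NormedAddCommGroup Y] [NormedSpace 𝕜 Y]

theorem one_sub_transfer_comp_transfer_eq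
    {A A' : H →L[𝕜] H} {B : U →L[𝕜] H} {B' : H →L[𝕜] U} {C : H →L[𝕜] Y} {C' : Y →L[𝕜] H}
    {D : U →L[𝕜] Y} {D' : Y →L[𝕜] U}
    (hAA : A ∘L A' + B ∘L B' = 1) (hAC : A ∘L C' + B ∘L D' = 0)
    (hCA : C ∘L A' + D ∘L B' = 0) (hCC : C ∘L C' + D ∘L D' = 1)
    {z w : 𝕜} {Q R : H →L[𝕜] H} (hQ : Q * (1 - z • A) = 1) (hR : (1 - w • A') * R = 1) :
    1 - (D + z • (C ∘L Q ∘L B)) ∘L (D' + w • (B' ∘L R ∘L C')) =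
      (1 - z * w) • (C ∘L Q ∘L R ∘L C') := by
  have hBB : B ∘L B' = 1 - A ∘L A' := eq_sub_of_add_eq' hAA
  have hBD : B ∘L D' = -(A ∘L C') := eq_neg_of_add_eq_zero_right hAC
  have hDB : D ∘L B' = -(C ∘L A') := eq_neg_of_add_eq_zero_right hCA
  have hDD : D ∘L D' = 1 - C ∘L C' := eq_sub_of_add_eq' hCC
  calc 1 - (D + z • (C ∘L Q ∘L B)) ∘L (D' + w • (B' ∘L R ∘L C'))
      = 1 - D ∘L D' - w • ((D ∘L B') ∘L R ∘L C') - z • (C ∘L Q ∘L (B ∘L D'))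
          - (z * w) • (C ∘L Q ∘L (B ∘L B') ∘L R ∘L C') := by
        simp only [add_comp, comp_add, smul_comp, comp_smul, comp_assoc]
        module
    _ = C ∘L ((1 - z * w) • (Q * R)) ∘L C' := by
        rw [hBB, hBD, hDB, hDD, one_sub_mul_smul_mul_eq_of_mul_eq_one hQ hR]
        simp only [mul_def, add_comp, comp_add, sub_comp, comp_sub, smul_comp, comp_smul,
          neg_comp, comp_neg, one_def, id_comp, comp_id, comp_assoc]
        module
    _ = (1 - z * w) • (C ∘L Q ∘L R ∘L C') := by
        simp only [mul_def, smul_comp, comp_smul, comp_assoc]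

end Colligation

theorem isUnit_one_sub_smul_of_norm_lt_one {𝕜 R : Type*} [NormedField 𝕜] [NormedRing R]
    [NormedSpace 𝕜 R] [HasSummableGeomSeries R] {w : 𝕜} {T : R} (hw : ‖w‖ < 1)
    (hT : ‖T‖ ≤ 1) : IsUnit (1 - w • T) :=
  isUnit_one_sub_of_norm_lt_one <| by
    rw [norm_smul]; nlinarith [norm_nonneg w, norm_nonneg T]

theorem adjoint_ringInverse {𝕜 H : Type*} [RCLike 𝕜] [NormedAddCommGroup H]
    [InnerProductSpace 𝕜 H] [CompleteSpace H] (T : H →L[𝕜] H) :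
    (Ring.inverse T)† = Ring.inverse (T†) := by
  rw [← star_eq_adjoint, ← star_eq_adjoint, Ring.inverse_star]

/-- For a coisometric colligation `[[A,B],[C,D]] : H ⊕ U → H ⊕ Y` with `‖A‖ ≤ 1`, the
transfer function `S(z) = D + z C (I - zA)⁻¹ B` satisfies the de Branges–Rovnyak kernel
identity `I - S(z) S(ζ)* = (1 - z ζ̄) C (I - zA)⁻¹ (I - ζ̄ A*)⁻¹ C*` on the unit disk. -/
theorem coisometric_colligation_kernel_identity
    {H U Y : Type*}
    [NormedAddCommGroup H] [InnerProductSpace ℂ H] [CompleteSpace H]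
    [NormedAddCommGroup U] [InnerProductSpace ℂ U] [CompleteSpace U]
    [NormedAddCommGroup Y] [InnerProductSpace ℂ Y] [CompleteSpace Y]
    (A : H →L[ℂ] H) (B : U →L[ℂ] H) (C : H →L[ℂ] Y) (D : U →L[ℂ] Y)
    (hA : ‖A‖ ≤ 1)
    (hco₁ : A ∘L ContinuousLinearMap.adjoint A + B ∘L ContinuousLinearMap.adjoint B = 1)
    (hco₂ : A ∘L ContinuousLinearMap.adjoint C + B ∘L ContinuousLinearMap.adjoint D = 0)
    (hco₃ : C ∘L ContinuousLinearMap.adjoint C + D ∘L ContinuousLinearMap.adjoint D = 1)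
    (S : ℂ → (U →L[ℂ] Y))
    (hS : ∀ z : ℂ, S z = D + z • (C ∘L Ring.inverse ((1 : H →L[ℂ] H) - z • A) ∘L B)) :
    ∀ z ζ : ℂ, ‖z‖ < 1 → ‖ζ‖ < 1 →
      1 - S z ∘L ContinuousLinearMap.adjoint (S ζ) =
        (1 - z * (starRingEnd ℂ) ζ) •
          (C ∘L Ring.inverse ((1 : H →L[ℂ] H) - z • A)
            ∘L Ring.inverse ((1 : H →L[ℂ] H)
                  - ((starRingEnd ℂ) ζ) • ContinuousLinearMap.adjoint A)
            ∘L ContinuousLinearMap.adjoint C) := by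
  intro z ζ hz hζ
  have hCA : C ∘L A† + D ∘L B† = 0 := by
    simpa only [map_add, adjoint_comp, adjoint_adjoint, map_zero] using congrArg adjoint hco₂
  have hSζ : (S ζ)† = D† + starRingEnd ℂ ζ •
      (B† ∘L Ring.inverse (1 - starRingEnd ℂ ζ • A†) ∘L C†) := by
    rw [hS ζ, map_add, LinearIsometryEquiv.map_smulₛₗ, adjoint_comp, adjoint_comp,
      adjoint_ringInverse, map_sub, LinearIsometryEquiv.map_smulₛₗ, adjoint_one, comp_assoc]
  have hQ : IsUnit (1 - z • A) := isUnit_one_sub_smul_of_norm_lt_one hz hA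
  have hR : IsUnit (1 - starRingEnd ℂ ζ • A†) :=
    isUnit_one_sub_smul_of_norm_lt_one (by rwa [RCLike.norm_conj]) (by rwa [adjoint.norm_map])
  rw [hS z, hSζ]
  exact one_sub_transfer_comp_transfer_eq hco₁ hco₂ hCA hco₃
    (Ring.inverse_mul_cancel _ hQ) (Ring.mul_inverse_cancel _ hR)
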